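/- The Lobachevsky function Λ(x) = -∫₀ˣ log|2 sin t| dt attains its maximum over [0, π] at x = π/6, i.e. Λ(x) ≤ Λ(π/6) for all x ∈ [0, π]. -/

import Mathlib

/-!
Since `Λ' = -log |2 sin x|` has the sign of `1/2 - |sin x|`, the function `Λ` increases on
`[0, π/6]`, decreases on `[π/6, 5π/6]` and increases again on `[5π/6, π]`. On the last piece it
stays below `Λ(π) = -(π log 2 + ∫₀^π log sin) = 0 = Λ(0)`, by the classical value
`∫₀^π log sin = -π log 2`.
-/

open Real MeasureTheory Set

/-- The Lobachevsky function `Λ(x) = -∫₀ˣ log|2 sin t| dt`. -/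
noncomputable def lobachevsky (x : ℝ) : ℝ := -∫ t in (0:ℝ)..x, Real.log |2 * Real.sin t|

theorem intervalIntegrable_log_abs_two_mul_sin {a b : ℝ} :
    IntervalIntegrable (fun t => log |2 * sin t|) volume a b :=
  (analyticOnNhd_const.mul analyticOnNhd_sin).meromorphicOn.intervalIntegrable_log_norm

theorem integral_log_abs_two_mul_sin_zero_pi : ∫ t in 0..π, log |2 * sin t| = 0 := by
  have ae_ne_pi : ∀ᵐ t ∂volume, t ≠ π := by simp [ae_iff]
  have hlog_sin : IntervalIntegrable (fun t => log (sin t)) volume 0 π :=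
    intervalIntegrable_log_sin
  calc ∫ t in 0..π, log |2 * sin t| = ∫ t in 0..π, (log 2 + log (sin t)) := by
        refine intervalIntegral.integral_congr_ae ?_
        filter_upwards [ae_ne_pi] with t hne ht
        rw [uIoc_of_le pi_pos.le] at ht
        have hsin : 0 < sin t := sin_pos_of_pos_of_lt_pi ht.1 (ht.2.lt_of_ne hne)
        rw [abs_of_pos (by positivity), log_mul two_ne_zero hsin.ne']
    _ = π * log 2 + -log 2 * π := by
        rw [intervalIntegral.integral_add intervalIntegrable_const hlog_sin,
          intervalIntegral.integral_const, integral_log_sin_zero_pi, smul_eq_mul, sub_zero]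
    _ = 0 := by ring

theorem lobachevsky_zero : lobachevsky 0 = 0 := by
  simp [lobachevsky]

theorem lobachevsky_pi : lobachevsky π = 0 := by
  rw [lobachevsky, integral_log_abs_two_mul_sin_zero_pi, neg_zero]

theorem lobachevsky_sub_lobachevsky (a b : ℝ) :
    lobachevsky b - lobachevsky a = -∫ t in a..b, log |2 * sin t| := by
  rw [← intervalIntegral.integral_interval_sub_left intervalIntegrable_log_abs_two_mul_sin
    intervalIntegrable_log_abs_two_mul_sin, lobachevsky, lobachevsky]
  ring

theorem lobachevsky_le_of_log_abs_two_mul_sin_nonpos {a b : ℝ} (hab : a ≤ b)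
    (h : ∀ t ∈ Icc a b, log |2 * sin t| ≤ 0) : lobachevsky a ≤ lobachevsky b := by
  have := intervalIntegral.integral_nonneg (μ := volume) hab fun t ht => neg_nonneg.mpr (h t ht)
  rw [intervalIntegral.integral_neg] at this
  linarith [lobachevsky_sub_lobachevsky a b]

theorem lobachevsky_le_of_log_abs_two_mul_sin_nonneg {a b : ℝ} (hab : a ≤ b)
    (h : ∀ t ∈ Icc a b, 0 ≤ log |2 * sin t|) : lobachevsky b ≤ lobachevsky a := by
  linarith [lobachevsky_sub_lobachevsky a b, intervalIntegral.integral_nonneg (μ := volume) hab h]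

theorem log_abs_two_mul_sin_nonpos {t : ℝ} (h : |sin t| ≤ 1 / 2) : log |2 * sin t| ≤ 0 :=
  log_nonpos (abs_nonneg _) (by rw [abs_mul, abs_two]; linarith)

theorem log_abs_two_mul_sin_nonneg {t : ℝ} (h : 1 / 2 ≤ |sin t|) : 0 ≤ log |2 * sin t| :=
  log_nonneg (by rw [abs_mul, abs_two]; linarith)

theorem abs_sin_le_half_of_mem_Icc_zero_pi_div_six {t : ℝ} (ht : t ∈ Icc 0 (π / 6)) :
    |sin t| ≤ 1 / 2 := by
  rw [abs_of_nonneg (sin_nonneg_of_nonneg_of_le_pi ht.1 (by linarith [ht.2, pi_pos])),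
    ← sin_pi_div_six]
  exact sin_le_sin_of_le_of_le_pi_div_two (by linarith [ht.1, pi_pos]) (by linarith [pi_pos]) ht.2

theorem abs_sin_le_half_of_mem_Icc_five_pi_div_six_pi {t : ℝ} (ht : t ∈ Icc (5 * π / 6) π) :
    |sin t| ≤ 1 / 2 := by
  rw [← sin_pi_sub]
  exact abs_sin_le_half_of_mem_Icc_zero_pi_div_six ⟨by linarith [ht.2], by linarith [ht.1]⟩

theorem half_le_sin_of_mem_Icc_pi_div_six_five_pi_div_six {t : ℝ}
    (ht : t ∈ Icc (π / 6) (5 * π / 6)) : 1 / 2 ≤ sin t := by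
  rw [← sin_pi_div_six]
  rcases le_total t (π / 2) with h | h
  · exact sin_le_sin_of_le_of_le_pi_div_two (by linarith [pi_pos]) h ht.1
  · rw [← sin_pi_sub t]
    exact sin_le_sin_of_le_of_le_pi_div_two (by linarith [pi_pos]) (by linarith) (by linarith [ht.2])

theorem lobachevsky_monotoneOn_Icc_zero_pi_div_six : MonotoneOn lobachevsky (Icc 0 (π / 6)) :=
  fun _ ha _ hb hab => lobachevsky_le_of_log_abs_two_mul_sin_nonpos hab fun _ ht =>
    log_abs_two_mul_sin_nonpos
      (abs_sin_le_half_of_mem_Icc_zero_pi_div_six ⟨ha.1.trans ht.1, ht.2.trans hb.2⟩)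

theorem lobachevsky_antitoneOn_Icc_pi_div_six_five_pi_div_six :
    AntitoneOn lobachevsky (Icc (π / 6) (5 * π / 6)) :=
  fun _ ha _ hb hab => lobachevsky_le_of_log_abs_two_mul_sin_nonneg hab fun _ ht =>
    log_abs_two_mul_sin_nonneg <|
      (half_le_sin_of_mem_Icc_pi_div_six_five_pi_div_six
        ⟨ha.1.trans ht.1, ht.2.trans hb.2⟩).trans (le_abs_self _)

theorem lobachevsky_monotoneOn_Icc_five_pi_div_six_pi :
    MonotoneOn lobachevsky (Icc (5 * π / 6) π) :=
  fun _ ha _ hb hab => lobachevsky_le_of_log_abs_two_mul_sin_nonpos hab fun _ ht =>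
    log_abs_two_mul_sin_nonpos
      (abs_sin_le_half_of_mem_Icc_five_pi_div_six_pi ⟨ha.1.trans ht.1, ht.2.trans hb.2⟩)

/-- `Λ` attains its maximum over `[0, π]` at `π/6`. -/
theorem lobachevsky_max_on_Icc :
    ∀ x ∈ Set.Icc (0:ℝ) Real.pi, lobachevsky x ≤ lobachevsky (Real.pi / 6) := by
  have hπ := pi_pos
  rintro x ⟨hx₀, hxπ⟩
  rcases le_total x (π / 6) with h₁ | h₁
  · exact lobachevsky_monotoneOn_Icc_zero_pi_div_six ⟨hx₀, h₁⟩ ⟨by positivity, le_rfl⟩ h₁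
  rcases le_total x (5 * π / 6) with h₂ | h₂
  · exact lobachevsky_antitoneOn_Icc_pi_div_six_five_pi_div_six
      ⟨le_rfl, by linarith⟩ ⟨h₁, h₂⟩ h₁
  calc lobachevsky x ≤ lobachevsky π :=
        lobachevsky_monotoneOn_Icc_five_pi_div_six_pi ⟨h₂, hxπ⟩ ⟨by linarith, le_rfl⟩ hxπ
    _ = lobachevsky 0 := by rw [lobachevsky_pi, lobachevsky_zero]
    _ ≤ lobachevsky (π / 6) :=
        lobachevsky_monotoneOn_Icc_zero_pi_div_six ⟨le_rfl, by positivity⟩ ⟨by positivity, le_rfl⟩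
          (by positivity)
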